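/- arXiv:2402.12218 — 4 statements merged into one kernel-verified Lean document; each statement's English description precedes it below -/
import Mathlib

section
/- Let ℓ be a prime with ℓ ≡ 1 (mod 12) and let p be any rational prime. Then the polynomial X⁴ + pX² + p², with its coefficients reduced modulo ℓ, splits into a product of linear factors in F_ℓ[X] if and only if the Legendre symbol (p/ℓ) ≠ −1. -/
/-!
If `ω` is a primitive cube root of unity in a field `K`, then
`X⁴ + qX² + q² = (X² - qω)(X² - qω²)`, and both `ω = (ω²)²` and `ω²` are nonzero squares; so
the quartic splits iff both quadratic factors do, i.e. iff `q` is a square. Since `3 ∣ ℓ - 1`,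
the cyclic group `𝔽_ℓˣ` contains such an `ω`, and `p` is a square mod `ℓ` iff `(p/ℓ) ≠ -1`.
-/

open Polynomial

theorem isSquare_mul_sq_iff {G : Type*} [CommGroupWithZero G] {s : G} (hs : s ≠ 0) (q : G) :
    IsSquare (q * s ^ 2) ↔ IsSquare q := by
  refine ⟨fun h ↦ ?_, fun h ↦ h.mul (IsSquare.sq s)⟩
  have : q = q * s ^ 2 * s⁻¹ ^ 2 := by field_simp
  exact this ▸ h.mul (IsSquare.sq _)

theorem splits_X_sq_sub_C_iff {R : Type*} [CommRing R] [IsDomain R] (a : R) :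
    Splits (X ^ 2 - C a) ↔ IsSquare a := by
  constructor
  · intro h
    obtain ⟨x, hx⟩ := h.exists_eval_eq_zero (by rw [degree_X_pow_sub_C two_pos]; decide)
    simp only [eval_sub, eval_pow, eval_X, eval_C, sub_eq_zero] at hx
    exact ⟨x, hx ▸ sq x⟩
  · rintro ⟨s, rfl⟩
    have : (X ^ 2 - C (s * s) : R[X]) = (X - C s) * (X - C (-s)) := by
      simp only [C_neg, C_mul]; ring
    exact this ▸ (Splits.X_sub_C s).mul (Splits.X_sub_C (-s))

section CubeRootOfUnity

variable {K : Type*} [Field K] {ω : K}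

theorem X_pow_four_add_C_mul_X_sq_add_C_sq_eq (hω : ω ^ 2 + ω + 1 = 0) (q : K) :
    (X ^ 4 + C q * X ^ 2 + C (q ^ 2) : K[X]) = (X ^ 2 - C (q * ω)) * (X ^ 2 - C (q * ω ^ 2)) := by
  have hsum : q * ω + q * ω ^ 2 = -q := by linear_combination q * hω
  have hprod : q * ω * (q * ω ^ 2) = q ^ 2 := by linear_combination q ^ 2 * (ω - 1) * hω
  calc (X ^ 4 + C q * X ^ 2 + C (q ^ 2) : K[X])
      = X ^ 4 - C (q * ω + q * ω ^ 2) * X ^ 2 + C (q * ω * (q * ω ^ 2)) := by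
        rw [hsum, hprod, C_neg]; ring
    _ = (X ^ 2 - C (q * ω)) * (X ^ 2 - C (q * ω ^ 2)) := by simp only [C_add, C_mul]; ring

theorem splits_X_pow_four_add_C_mul_X_sq_add_C_sq_iff (hω : ω ^ 2 + ω + 1 = 0) (q : K) :
    Splits (X ^ 4 + C q * X ^ 2 + C (q ^ 2) : K[X]) ↔ IsSquare q := by
  have hω0 : ω ≠ 0 := by rintro rfl; simp at hω
  have hω_sq : ω = (ω ^ 2) ^ 2 := by linear_combination (-ω ^ 2 + ω) * hω
  rw [X_pow_four_add_C_mul_X_sq_add_C_sq_eq hω, splits_mul (X_pow_sub_C_ne_zero two_pos _)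
    (X_pow_sub_C_ne_zero two_pos _), splits_X_sq_sub_C_iff, splits_X_sq_sub_C_iff]
  nth_rewrite 1 [hω_sq]
  rw [isSquare_mul_sq_iff (pow_ne_zero 2 hω0), isSquare_mul_sq_iff hω0, and_self]

end CubeRootOfUnity

theorem ZMod.exists_sq_add_self_add_one_eq_zero {ℓ : ℕ} [Fact ℓ.Prime] (h : 3 ∣ ℓ - 1) :
    ∃ ω : ZMod ℓ, ω ^ 2 + ω + 1 = 0 := by
  have : NeZero (ℓ - 1) := ⟨by have := (Fact.out : ℓ.Prime).two_le; omega⟩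
  have := HasEnoughRootsOfUnity.of_dvd (ZMod ℓ) h
  obtain ⟨ω, hω⟩ := HasEnoughRootsOfUnity.exists_primitiveRoot (ZMod ℓ) 3
  have := hω.geom_sum_eq_zero (by norm_num)
  simp only [Finset.sum_range_succ, Finset.sum_range_zero, pow_zero, pow_one, zero_add] at this
  exact ⟨ω, by linear_combination this⟩

theorem split_linear_iff_legendre_ne_neg_one_case1_general
    (ℓ : ℕ) [Fact ℓ.Prime] (h12 : ℓ % 12 = 1) (p : ℕ) :
    Polynomial.Splits ((X ^ 4 + C (p : ZMod ℓ) * X ^ 2 + C ((p : ZMod ℓ) ^ 2)).map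
      (RingHom.id (ZMod ℓ)))
      ↔ jacobiSym p ℓ ≠ -1 := by
  obtain ⟨ω, hω⟩ := ZMod.exists_sq_add_self_add_one_eq_zero (ℓ := ℓ) (by omega)
  rw [map_id, splits_X_pow_four_add_C_mul_X_sq_add_C_sq_iff hω, ne_eq,
    ← jacobiSym.legendreSym.to_jacobiSym, legendreSym.eq_neg_one_iff', not_not]

/-- Let `ℓ` be a prime with `ℓ ≡ 1 (mod 12)` and let `p` be any rational
prime. Then the polynomial `X⁴ + pX² + p²`, with its coefficients reduced modulo `ℓ`, splits
into a product of linear factors in `F_ℓ[X]` if and only if the Legendre symbol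
`(p/ℓ) ≠ −1` (here expressed via the Jacobi symbol, which coincides with the Legendre
symbol for primes). -/
theorem split_linear_iff_legendre_ne_neg_one_case1
    (ℓ : ℕ) [Fact ℓ.Prime] (h12 : ℓ % 12 = 1) (p : ℕ) (hp : p.Prime) :
    Polynomial.Splits ((X ^ 4 + C (p : ZMod ℓ) * X ^ 2 + C ((p : ZMod ℓ) ^ 2)).map
      (RingHom.id (ZMod ℓ)))
      ↔ jacobiSym p ℓ ≠ -1 :=
  split_linear_iff_legendre_ne_neg_one_case1_general ℓ h12 p
end

section
/- Let ℓ be a prime with ℓ ≡ 1 (mod 8) and let p be any rational prime. Then the polynomial X⁴ + p², with its coefficients reduced modulo ℓ, splits into a product of linear factors in F_ℓ[X] if and only if the Legendre symbol (p/ℓ) ≠ −1. -/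
/-!
With `ζ ^ 4 = -1` one has `X⁴ + q² = (X² - ζ²q)(X² + ζ²q)`. If `q = a²`, the roots are `±ζa, ±ζ³a`.
Conversely a root `x` has `x² = ±ζ²q`, so `q` is `(ζ³x)²` or `(ζx)²`. For `ℓ ≡ 1 (mod 8)`, such a
`ζ` exists in `𝔽_ℓ`, namely `(1 + i) / √2`, and `q = p` is a square mod `ℓ` iff `(p/ℓ) ≠ -1`.
-/

open Polynomial

namespace Polynomial

variable {K : Type*} [Field K] {ζ : K}

theorem splits_X_sq_sub_C_sq (t : K) : Splits (X ^ 2 - C (t ^ 2)) := by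
  have h : (X ^ 2 - C (t ^ 2) : K[X]) = (X - C t) * (X - C (-t)) := by
    simp only [map_pow, map_neg]; ring
  rw [h]
  exact (Splits.X_sub_C _).mul (Splits.X_sub_C _)

theorem X_pow_four_add_C_sq_eq_mul (hζ : ζ ^ 4 = -1) (q : K) :
    (X ^ 4 + C (q ^ 2) : K[X]) = (X ^ 2 - C (ζ ^ 2 * q)) * (X ^ 2 + C (ζ ^ 2 * q)) := by
  have hC : (C ζ) ^ 4 = -1 := by rw [← map_pow, hζ, map_neg, map_one]
  simp only [map_pow, map_mul]
  linear_combination (C q) ^ 2 * hC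

theorem isSquare_of_eval_X_pow_four_add_C_sq (hζ : ζ ^ 4 = -1) {q x : K}
    (hx : eval x (X ^ 4 + C (q ^ 2)) = 0) : IsSquare q := by
  rw [X_pow_four_add_C_sq_eq_mul hζ] at hx
  simp only [eval_mul, eval_sub, eval_add, eval_pow, eval_X, eval_C] at hx
  rcases mul_eq_zero.1 hx with h | h
  · exact ⟨ζ ^ 3 * x, by linear_combination -q * (ζ ^ 4 - 1) * hζ - ζ ^ 6 * h⟩
  · exact ⟨ζ * x, by linear_combination q * hζ - ζ ^ 2 * h⟩

theorem splits_X_pow_four_add_C_sq_iff (hζ : ζ ^ 4 = -1) (q : K) :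
    Splits (X ^ 4 + C (q ^ 2)) ↔ IsSquare q := by
  constructor
  · intro hsplit
    have hdeg : (X ^ 4 + C (q ^ 2) : K[X]).degree ≠ 0 := by
      rw [degree_X_pow_add_C (by norm_num)]; norm_num
    obtain ⟨x, hx⟩ := hsplit.exists_eval_eq_zero hdeg
    exact isSquare_of_eval_X_pow_four_add_C_sq hζ hx
  · rintro ⟨a, rfl⟩
    have h₁ : ζ ^ 2 * (a * a) = (ζ * a) ^ 2 := by ring
    have h₂ : -(ζ ^ 2 * (a * a)) = (ζ ^ 3 * a) ^ 2 := by
      linear_combination (-(ζ ^ 2 * a ^ 2)) * hζ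
    rw [X_pow_four_add_C_sq_eq_mul hζ, ← sub_neg_eq_add, ← map_neg, h₂, h₁]
    exact (splits_X_sq_sub_C_sq _).mul (splits_X_sq_sub_C_sq _)

end Polynomial

theorem ZMod.exists_pow_four_eq_neg_one {ℓ : ℕ} [Fact ℓ.Prime] (h8 : ℓ % 8 = 1) :
    ∃ ζ : ZMod ℓ, ζ ^ 4 = -1 := by
  obtain ⟨i, hi⟩ := (ZMod.exists_sq_eq_neg_one_iff (p := ℓ)).2 (by omega)
  obtain ⟨s, hs⟩ := (ZMod.exists_sq_eq_two_iff (by omega)).2 (Or.inl h8)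
  have htwo : (2 : ZMod ℓ) ≠ 0 := Ring.two_ne_zero (by rw [ZMod.ringChar_zmod_n]; omega)
  have hs0 : s ≠ 0 := by rintro rfl; exact htwo (by simpa using hs)
  refine ⟨(1 + i) / s, ?_⟩
  field_simp
  linear_combination (-(5 + 4 * i + i ^ 2)) * hi - (s ^ 2 + 2) * hs

theorem split_linear_iff_legendre_ne_neg_one_case3_general
    (ℓ : ℕ) [Fact ℓ.Prime] (h8 : ℓ % 8 = 1) (p : ℕ) :
    Polynomial.Splits
      ((X ^ 4 + C ((p : ZMod ℓ) ^ 2)).map (RingHom.id (ZMod ℓ)))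
      ↔ jacobiSym p ℓ ≠ -1 := by
  rw [Polynomial.map_id, ne_eq, ZMod.nonsquare_iff_jacobiSym_eq_neg_one, not_not, Int.cast_natCast]
  obtain ⟨ζ, hζ⟩ := ZMod.exists_pow_four_eq_neg_one h8
  exact Polynomial.splits_X_pow_four_add_C_sq_iff hζ _

/-- Let `ℓ` be a prime with `ℓ ≡ 1 (mod 8)` and let `p` be any rational
prime. Then the polynomial `X⁴ + p²`, with its coefficients reduced modulo `ℓ`, splits into
a product of linear factors in `F_ℓ[X]` if and only if the Legendre symbol `(p/ℓ) ≠ −1`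
(expressed via the Jacobi symbol, which coincides with the Legendre symbol for odd
primes). -/
theorem split_linear_iff_legendre_ne_neg_one_case3
    (ℓ : ℕ) [Fact ℓ.Prime] (h8 : ℓ % 8 = 1) (p : ℕ) (hp : p.Prime) :
    Polynomial.Splits
      ((X ^ 4 + C ((p : ZMod ℓ) ^ 2)).map (RingHom.id (ZMod ℓ)))
      ↔ jacobiSym p ℓ ≠ -1 :=
  split_linear_iff_legendre_ne_neg_one_case3_general ℓ h8 p
end

section
/- There is an absolute constant c such that for every prime ℓ ≥ 5 and each 1 ≤ i ≤ 5, the image of GC^i(ℓ) ∩ GB(ℓ) under the quotient map GB(ℓ) → GB(ℓ)/GU'(ℓ) has cardinality at most c (in particular, the cardinality is bounded independently of ℓ). -/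
/-!
An element of `GB(ℓ)` is determined by its block `A = [[α, β], [0, δ]]`, its multiplier `μ`
and the symmetric matrix `S`, and its coset modulo `GU'(ℓ)` depends only on the ratios `α / δ` and
`μ / α²`: two elements sharing them differ by a factor whose block `A` is `[[λ, a], [0, λ]]`
and whose multiplier is `λ²`. The characteristic polynomial is
`(X - α)(X - δ)(X - μ/α)(X - μ/δ)`; if it equals `f_i` with parameter `ν`, then `α` and `δ` are
roots of `f_i` and `μ² = ν²`. Every root `x` of `f_i` satisfies `x²⁴ = ν¹²`, so
`(α / δ)²⁴ = 1` and `(μ / α²)¹² = 1`, which leaves at most `24 · 12` cosets.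
-/

open Matrix Polynomial

/-- Assemble a `4×4` matrix out of four `2×2` blocks. -/
def blocks4 {ℓ : ℕ} (A B C D : Matrix (Fin 2) (Fin 2) (ZMod ℓ)) :
    Matrix (Fin 4) (Fin 4) (ZMod ℓ) :=
  Matrix.reindex finSumFinEquiv finSumFinEquiv (fromBlocks A B C D)

/-- The standard symplectic matrix `J = [[0, I₂], [−I₂, 0]]`. -/
def Jmat (ℓ : ℕ) : Matrix (Fin 4) (Fin 4) (ZMod ℓ) :=
  blocks4 0 1 (-1) 0

/-- `GSp₄(F_ℓ) = {M ∈ GL₄(F_ℓ) : ᵗM·J·M = μJ for some μ ∈ F_ℓˣ}`. -/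
def GSpSet (ℓ : ℕ) : Set (GL (Fin 4) (ZMod ℓ)) :=
  {M | ∃ μ : (ZMod ℓ)ˣ, M.valᵀ * Jmat ℓ * M.val = (μ : ZMod ℓ) • Jmat ℓ}

/-- `GB(ℓ) = {[[A, μ⁻¹AS], [0, μ(ᵗA)⁻¹]] : A ∈ GL₂ upper triangular, S symmetric,
μ ∈ F_ℓˣ}`. -/
def GBSet (ℓ : ℕ) : Set (GL (Fin 4) (ZMod ℓ)) :=
  {M | ∃ (A S : Matrix (Fin 2) (Fin 2) (ZMod ℓ)) (μ : (ZMod ℓ)ˣ),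
    IsUnit A.det ∧ A 1 0 = 0 ∧ S.IsSymm ∧
    M.val = blocks4 A (((μ⁻¹ : (ZMod ℓ)ˣ) : ZMod ℓ) • (A * S)) 0
      ((μ : ZMod ℓ) • Aᵀ⁻¹)}

/-- `GU'(ℓ) = {[[A, μ⁻¹AS], [0, μ(ᵗA)⁻¹]] : A = [[λ, a], [0, λ]], λ ∈ F_ℓˣ, μ = λ²,
S symmetric}`. -/
def GU'Set (ℓ : ℕ) : Set (GL (Fin 4) (ZMod ℓ)) :=
  {M | ∃ (lam : (ZMod ℓ)ˣ) (a : ZMod ℓ) (S : Matrix (Fin 2) (Fin 2) (ZMod ℓ)), S.IsSymm ∧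
    M.val = blocks4 !![(lam : ZMod ℓ), a; 0, (lam : ZMod ℓ)]
      ((((lam⁻¹ : (ZMod ℓ)ˣ) : ZMod ℓ) ^ 2) •
        (!![(lam : ZMod ℓ), a; 0, (lam : ZMod ℓ)] * S))
      0
      (((lam : ZMod ℓ) ^ 2) • (!![(lam : ZMod ℓ), a; 0, (lam : ZMod ℓ)])ᵀ⁻¹)}
/-- The five reference quartic polynomials `f₁ = X⁴+μX²+μ²`, `f₂ = X⁴−μX²+μ²`,
`f₃ = X⁴+μ²`, `f₄ = (X²−μ)²`, `f₅ = (X²+μ)²`. -/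
noncomputable def fPoly (ℓ : ℕ) (i : ℕ) (μ : ZMod ℓ) : Polynomial (ZMod ℓ) :=
  if i = 1 then X ^ 4 + C μ * X ^ 2 + C (μ ^ 2)
  else if i = 2 then X ^ 4 - C μ * X ^ 2 + C (μ ^ 2)
  else if i = 3 then X ^ 4 + C (μ ^ 2)
  else if i = 4 then (X ^ 2 - C μ) ^ 2
  else (X ^ 2 + C μ) ^ 2

/-- `GC^i(ℓ)`: the set of `M ∈ GSp₄(F_ℓ)` whose characteristic polynomial equals `f_i`
(for some `μ ∈ F_ℓˣ`) and factors as `(X−λ₁)(X−μλ₁⁻¹)(X−λ₂)(X−μλ₂⁻¹)` with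
`λ₁, λ₂ ∈ F_ℓˣ` (the inverses being witnessed by `lam₁'`, `lam₂'`). -/
def GCSet (ℓ : ℕ) (i : ℕ) : Set (GL (Fin 4) (ZMod ℓ)) :=
  {M | M ∈ GSpSet ℓ ∧ ∃ μ lam₁ lam₂ lam₁' lam₂' : ZMod ℓ, μ ≠ 0 ∧
    lam₁ * lam₁' = 1 ∧ lam₂ * lam₂' = 1 ∧
    M.val.charpoly = fPoly ℓ i μ ∧
    M.val.charpoly =
      (X - C lam₁) * (X - C (μ * lam₁')) * (X - C lam₂) * (X - C (μ * lam₂'))}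

lemma Polynomial.card_nthRootsFinset_le {R : Type*} [CommRing R] [IsDomain R] (n : ℕ) (a : R) :
    (nthRootsFinset n a).card ≤ n := by
  classical
  rw [nthRootsFinset_def]
  exact (Multiset.toFinset_card_le _).trans (card_nthRoots n a)

lemma Set.ncard_image_le_of_factorsThrough {α β γ : Type*} {f : α → β} {g : α → γ} {s : Set α}
    {t : Set γ} (ht : t.Finite) (hg : MapsTo g s t)
    (hfg : ∀ x ∈ s, ∀ y ∈ s, g x = g y → f x = f y) : (f '' s).ncard ≤ t.ncard := by
  obtain rfl | ⟨x₀, -⟩ := s.eq_empty_or_nonempty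
  · simp
  have : Nonempty α := ⟨x₀⟩
  have hf : f '' s = (f ∘ Function.invFunOn g s) '' (g '' s) := by
    rw [image_image]
    refine image_congr fun x hx => (hfg _ (Function.invFunOn_mem ⟨x, hx, rfl⟩) x hx ?_).symm
    exact Function.invFunOn_eq ⟨x, hx, rfl⟩
  calc (f '' s).ncard ≤ (g '' s).ncard := hf ▸ ncard_image_le (ht.subset hg.image_subset)
    _ ≤ t.ncard := ncard_le_ncard hg.image_subset ht

lemma Matrix.eta_fin_two_of_apply_one_zero {R : Type*} [Zero R]
    {A : Matrix (Fin 2) (Fin 2) R} (h : A 1 0 = 0) :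
    A = !![A 0 0, A 0 1; 0, A 1 1] := by
  simpa [h] using Matrix.eta_fin_two A

lemma Matrix.IsSymm.eta_fin_two {R : Type*} {S : Matrix (Fin 2) (Fin 2) R} (hS : S.IsSymm) :
    S = !![S 0 0, S 0 1; S 0 1, S 1 1] := by
  simpa [hS.apply 0 1] using Matrix.eta_fin_two S

namespace GSp4

section Field

variable {K : Type*} [Field K]

/-- The element `[[A, μ⁻¹AS], [0, μ(ᵗA)⁻¹]]` of `GB` with `A = [[α, β], [0, δ]]` and
`S = [[s, t], [t, u]]`; the elements of `GU'` are those with `α = δ` and `μ = α²`. -/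
def gbMatrix (α β δ s t u μ : K) : Matrix (Fin 4) (Fin 4) K :=
  !![α, β, (α * s + β * t) / μ, (α * t + β * u) / μ;
     0, δ, δ * t / μ, δ * u / μ;
     0, 0, μ / α, 0;
     0, 0, -(μ * β / (α * δ)), μ / δ]

def gbInvariants (M : Matrix (Fin 4) (Fin 4) K) : K × K :=
  (M 0 0 / M 1 1, M 2 2 / M 0 0)

lemma gbInvariants_gbMatrix (α β δ s t u μ : K) :
    gbInvariants (gbMatrix α β δ s t u μ) = (α / δ, μ / α / α) :=
  rfl

lemma gbMatrix_charpoly (α β δ s t u μ : K) :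
    (gbMatrix α β δ s t u μ).charpoly =
      (X - C α) * (X - C δ) * (X - C (μ / α)) * (X - C (μ / δ)) := by
  -- swapping the last two coordinates makes the matrix upper triangular
  rw [← charpoly_reindex (Equiv.swap 2 3), charpoly_of_isUpperTriangular]
  · simp [Fin.prod_univ_four, gbMatrix, Equiv.swap_apply_of_ne_of_ne]
    ring
  · intro i j hij
    fin_cases i <;> fin_cases j <;> simp_all [gbMatrix, Equiv.swap_apply_of_ne_of_ne]

lemma gbMatrix_mul {α₁ δ₁ μ₁ α₂ δ₂ μ₂ : K} (β₁ s₁ t₁ u₁ β₂ s₂ t₂ u₂ : K)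
    (hα₁ : α₁ ≠ 0) (hδ₁ : δ₁ ≠ 0) (hμ₁ : μ₁ ≠ 0) (hα₂ : α₂ ≠ 0) (hδ₂ : δ₂ ≠ 0) (hμ₂ : μ₂ ≠ 0) :
    gbMatrix α₁ β₁ δ₁ s₁ t₁ u₁ μ₁ * gbMatrix α₂ β₂ δ₂ s₂ t₂ u₂ μ₂ =
      gbMatrix (α₁ * α₂) (α₁ * β₂ + β₁ * δ₂) (δ₁ * δ₂)
        (μ₁ * s₂ + μ₂ ^ 2 * (s₁ * δ₂ ^ 2 - 2 * t₁ * β₂ * δ₂ + u₁ * β₂ ^ 2) / (α₂ * δ₂) ^ 2)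
        (μ₁ * t₂ + μ₂ ^ 2 * (t₁ * δ₂ - u₁ * β₂) / (α₂ * δ₂ ^ 2))
        (μ₁ * u₂ + μ₂ ^ 2 * u₁ / δ₂ ^ 2) (μ₁ * μ₂) := by
  ext i j
  fin_cases i <;> fin_cases j <;>
    simp [gbMatrix, Matrix.mul_apply, Fin.sum_univ_four] <;> field_simp <;> ring

end Field

lemma blocks4_eq {ℓ : ℕ} (A B C D : Matrix (Fin 2) (Fin 2) (ZMod ℓ)) :
    blocks4 A B C D = !![A 0 0, A 0 1, B 0 0, B 0 1;
                         A 1 0, A 1 1, B 1 0, B 1 1;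
                         C 0 0, C 0 1, D 0 0, D 0 1;
                         C 1 0, C 1 1, D 1 0, D 1 1] := by
  ext i j
  fin_cases i <;> fin_cases j <;> rfl

lemma fPoly_eval_zero {ℓ i : ℕ} (hi₁ : 1 ≤ i) (hi₅ : i ≤ 5) (ν : ZMod ℓ) :
    (fPoly ℓ i ν).eval 0 = ν ^ 2 := by
  interval_cases i <;> simp [fPoly]

variable {ℓ : ℕ} [Fact ℓ.Prime]

/-- Each `f_i` divides `X²⁴ - ν¹²`: its roots `x` satisfy `x² = ±ν`, `x⁶ = ±ν³` or `x⁴ = -ν²`. -/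
lemma pow_24_eq_of_isRoot_fPoly {i : ℕ} (hi₁ : 1 ≤ i) (hi₅ : i ≤ 5) {ν x : ZMod ℓ}
    (hx : (fPoly ℓ i ν).IsRoot x) : x ^ 24 = ν ^ 12 := by
  interval_cases i <;> simp [fPoly] at hx
  · linear_combination (x ^ 2 - ν) * (x ^ 18 + x ^ 12 * ν ^ 3 + x ^ 6 * ν ^ 6 + ν ^ 9) * hx
  · linear_combination (x ^ 2 + ν) * (x ^ 18 - x ^ 12 * ν ^ 3 + x ^ 6 * ν ^ 6 - ν ^ 9) * hx
  · linear_combination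
      (x ^ 20 - x ^ 16 * ν ^ 2 + x ^ 12 * ν ^ 4 - x ^ 8 * ν ^ 6 + x ^ 4 * ν ^ 8 - ν ^ 10) * hx
  · rw [show x ^ 24 = (x ^ 2) ^ 12 by ring, sub_eq_zero.1 hx]
  · rw [show x ^ 24 = (x ^ 2) ^ 12 by ring, eq_neg_of_add_eq_zero_left hx]
    ring

lemma blocks4_eq_gbMatrix {α δ μ : ZMod ℓ} (β s t u : ZMod ℓ)
    (hα : α ≠ 0) (hδ : δ ≠ 0) (hμ : μ ≠ 0) :
    blocks4 !![α, β; 0, δ] (μ⁻¹ • (!![α, β; 0, δ] * !![s, t; t, u])) 0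
      (μ • (!![α, β; 0, δ])ᵀ⁻¹) = gbMatrix α β δ s t u μ := by
  rw [blocks4_eq]
  ext i j
  fin_cases i <;> fin_cases j <;>
    simp [gbMatrix, Matrix.inv_def, adjugate_fin_two, det_fin_two] <;> field_simp

lemma exists_eq_gbMatrix_of_mem_GBSet {m : GL (Fin 4) (ZMod ℓ)} (hm : m ∈ GBSet ℓ) :
    ∃ α β δ s t u μ : ZMod ℓ, α ≠ 0 ∧ δ ≠ 0 ∧ μ ≠ 0 ∧ m.val = gbMatrix α β δ s t u μ := by
  obtain ⟨A, S, μ, hdet, hA, hS, hm⟩ := hm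
  rw [eta_fin_two_of_apply_one_zero hA, hS.eta_fin_two] at hm
  rw [eta_fin_two_of_apply_one_zero hA, det_fin_two_of, mul_zero, sub_zero, isUnit_iff_ne_zero,
    mul_ne_zero_iff] at hdet
  refine ⟨A 0 0, A 0 1, A 1 1, S 0 0, S 0 1, S 1 1, μ, hdet.1, hdet.2, μ.ne_zero, ?_⟩
  rw [hm, Units.val_inv_eq_inv_val]
  exact blocks4_eq_gbMatrix _ _ _ _ hdet.1 hdet.2 μ.ne_zero

lemma mem_GU'Set_iff {x : GL (Fin 4) (ZMod ℓ)} :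
    x ∈ GU'Set ℓ ↔ ∃ l a s t u : ZMod ℓ, l ≠ 0 ∧ x.val = gbMatrix l a l s t u (l ^ 2) := by
  constructor
  · rintro ⟨l, a, S, hS, hx⟩
    refine ⟨l, a, S 0 0, S 0 1, S 1 1, l.ne_zero, ?_⟩
    rw [hx, hS.eta_fin_two, Units.val_inv_eq_inv_val, inv_pow]
    exact blocks4_eq_gbMatrix _ _ _ _ l.ne_zero l.ne_zero (pow_ne_zero 2 l.ne_zero)
  · rintro ⟨l, a, s, t, u, hl, hx⟩
    refine ⟨Units.mk0 l hl, a, !![s, t; t, u], ?_, ?_⟩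
    · ext i j
      fin_cases i <;> fin_cases j <;> rfl
    · rw [hx, Units.val_inv_eq_inv_val, Units.val_mk0, inv_pow]
      exact (blocks4_eq_gbMatrix _ _ _ _ hl hl (pow_ne_zero 2 hl)).symm

lemma mul_mem_GU'Set {x y : GL (Fin 4) (ZMod ℓ)} (hx : x ∈ GU'Set ℓ) (hy : y ∈ GU'Set ℓ) :
    x * y ∈ GU'Set ℓ := by
  obtain ⟨l₁, a₁, s₁, t₁, u₁, hl₁, hx⟩ := mem_GU'Set_iff.1 hx
  obtain ⟨l₂, a₂, s₂, t₂, u₂, hl₂, hy⟩ := mem_GU'Set_iff.1 hy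
  refine mem_GU'Set_iff.2 ⟨_, _, _, _, _, mul_ne_zero hl₁ hl₂, by
    rw [Units.val_mul, hx, hy, gbMatrix_mul _ _ _ _ _ _ _ _ hl₁ hl₁ (pow_ne_zero 2 hl₁) hl₂ hl₂
      (pow_ne_zero 2 hl₂), ← mul_pow l₁ l₂ 2]⟩

lemma inv_mul_mem_GU'Set_of_gbInvariants_eq {m₁ m₂ : GL (Fin 4) (ZMod ℓ)}
    (h₁ : m₁ ∈ GBSet ℓ) (h₂ : m₂ ∈ GBSet ℓ) (h : gbInvariants m₁.val = gbInvariants m₂.val) :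
    m₁⁻¹ * m₂ ∈ GU'Set ℓ := by
  obtain ⟨α₁, β₁, δ₁, s₁, t₁, u₁, μ₁, hα₁, hδ₁, hμ₁, hm₁⟩ := exists_eq_gbMatrix_of_mem_GBSet h₁
  obtain ⟨α₂, β₂, δ₂, s₂, t₂, u₂, μ₂, hα₂, hδ₂, hμ₂, hm₂⟩ := exists_eq_gbMatrix_of_mem_GBSet h₂
  rw [hm₁, hm₂, gbInvariants_gbMatrix, gbInvariants_gbMatrix, Prod.mk.injEq] at h
  obtain ⟨hαδ, hμα⟩ := h
  obtain ⟨l, rfl⟩ : ∃ l, α₂ = α₁ * l := ⟨α₂ / α₁, by field_simp⟩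
  have hl : l ≠ 0 := right_ne_zero_of_mul hα₂
  obtain rfl : δ₂ = δ₁ * l := by
    field_simp at hαδ
    linear_combination hαδ
  obtain rfl : μ₂ = μ₁ * l ^ 2 := by
    field_simp at hμα
    linear_combination -hμα
  obtain ⟨a, rfl⟩ : ∃ a, β₂ = α₁ * a + β₁ * l := ⟨(β₂ - β₁ * l) / α₁, by field_simp; ring⟩
  have hw : m₁.val * gbMatrix l a l ((s₂ - (s₁ * l ^ 2 - 2 * t₁ * a * l + u₁ * a ^ 2)) / μ₁)
      ((t₂ - l * (t₁ * l - u₁ * a)) / μ₁) ((u₂ - l ^ 2 * u₁) / μ₁) (l ^ 2) = m₂.val := by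
    rw [hm₁, hm₂, gbMatrix_mul _ _ _ _ _ _ _ _ hα₁ hδ₁ hμ₁ hl hl (pow_ne_zero 2 hl)]
    congr 1 <;> field_simp <;> ring
  exact mem_GU'Set_iff.2 ⟨l, a, _, _, _, hl, by
    rw [Units.val_mul, ← hw, ← mul_assoc, Units.inv_mul, one_mul]⟩

lemma coset_eq_of_gbInvariants_eq {m₁ m₂ : GL (Fin 4) (ZMod ℓ)}
    (h₁ : m₁ ∈ GBSet ℓ) (h₂ : m₂ ∈ GBSet ℓ) (h : gbInvariants m₁.val = gbInvariants m₂.val) :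
    {x | m₁⁻¹ * x ∈ GU'Set ℓ} = {x | m₂⁻¹ * x ∈ GU'Set ℓ} := by
  have subset {m m' : GL (Fin 4) (ZMod ℓ)} (hm : m ∈ GBSet ℓ) (hm' : m' ∈ GBSet ℓ)
      (hmm' : gbInvariants m.val = gbInvariants m'.val) :
      {x | m⁻¹ * x ∈ GU'Set ℓ} ⊆ {x | m'⁻¹ * x ∈ GU'Set ℓ} := fun x hx => by
    show m'⁻¹ * x ∈ GU'Set ℓ
    rw [show m'⁻¹ * x = m'⁻¹ * m * (m⁻¹ * x) by group]
    exact mul_mem_GU'Set (inv_mul_mem_GU'Set_of_gbInvariants_eq hm' hm hmm'.symm) hx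
  exact (subset h₁ h₂ h).antisymm (subset h₂ h₁ h.symm)

lemma gbInvariants_mem_nthRootsFinset {i : ℕ} (hi₁ : 1 ≤ i) (hi₅ : i ≤ 5)
    {m : GL (Fin 4) (ZMod ℓ)} (hc : m ∈ GCSet ℓ i) (hb : m ∈ GBSet ℓ) :
    gbInvariants m.val ∈ nthRootsFinset 24 (1 : ZMod ℓ) ×ˢ nthRootsFinset 12 (1 : ZMod ℓ) := by
  obtain ⟨α, β, δ, s, t, u, μ, hα, hδ, hμ, hm⟩ := exists_eq_gbMatrix_of_mem_GBSet hb
  obtain ⟨-, ν, -, -, -, -, -, -, -, hcp, -⟩ := hc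
  rw [hm, gbMatrix_charpoly] at hcp
  have hroot (x : ZMod ℓ) : (fPoly ℓ i ν).eval x =
      (x - α) * (x - δ) * (x - μ / α) * (x - μ / δ) := by
    simp [← hcp]
  have hα24 : α ^ 24 = ν ^ 12 := pow_24_eq_of_isRoot_fPoly hi₁ hi₅ (by simp [IsRoot, hroot])
  have hδ24 : δ ^ 24 = ν ^ 12 := pow_24_eq_of_isRoot_fPoly hi₁ hi₅ (by simp [IsRoot, hroot])
  have hμν : ν ^ 2 = μ ^ 2 := by
    rw [← fPoly_eval_zero hi₁ hi₅, hroot]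
    field_simp
    ring
  have hμ12 : μ ^ 12 = ν ^ 12 := by
    rw [show μ ^ 12 = (μ ^ 2) ^ 6 by ring, ← hμν]
    ring
  rw [hm, gbInvariants_gbMatrix, Finset.mem_product, mem_nthRootsFinset (by norm_num),
    mem_nthRootsFinset (by norm_num)]
  constructor
  · field_simp
    linear_combination hα24 - hδ24
  · field_simp
    linear_combination hμ12 - hα24

end GSp4

/-- There is an absolute constant `c` such that for every prime `ℓ ≥ 5`
and each `1 ≤ i ≤ 5`, the image of `GC^i(ℓ) ∩ GB(ℓ)` under the quotient map
`GB(ℓ) → GB(ℓ)/GU'(ℓ)` has cardinality at most `c`.  The image in the quotient is encoded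
as the collection of left cosets `m·GU'(ℓ)` as `m` ranges over `GC^i(ℓ) ∩ GB(ℓ)`. -/
theorem gsp4_quotient_image_bounded :
    ∃ c : ℕ, ∀ ℓ : ℕ, ℓ.Prime → 5 ≤ ℓ → ∀ i : ℕ, 1 ≤ i → i ≤ 5 →
      Set.ncard {S : Set (GL (Fin 4) (ZMod ℓ)) |
        ∃ m ∈ GCSet ℓ i ∩ GBSet ℓ, S = {x | m⁻¹ * x ∈ GU'Set ℓ}} ≤ c := by
  refine ⟨24 * 12, fun ℓ hℓ _ i hi₁ hi₅ => ?_⟩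
  have : Fact ℓ.Prime := ⟨hℓ⟩
  have himage : {S : Set (GL (Fin 4) (ZMod ℓ)) |
      ∃ m ∈ GCSet ℓ i ∩ GBSet ℓ, S = {x | m⁻¹ * x ∈ GU'Set ℓ}} =
      (fun m => {x | m⁻¹ * x ∈ GU'Set ℓ}) '' (GCSet ℓ i ∩ GBSet ℓ) := by
    simp only [Set.image, eq_comm]
  rw [himage]
  calc _ ≤ ((nthRootsFinset 24 (1 : ZMod ℓ) ×ˢ nthRootsFinset 12 (1 : ZMod ℓ) : Finset _) :
        Set (ZMod ℓ × ZMod ℓ)).ncard :=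
      Set.ncard_image_le_of_factorsThrough (Finset.finite_toSet _)
        (fun _ hm => GSp4.gbInvariants_mem_nthRootsFinset hi₁ hi₅ hm.1 hm.2)
        (fun _ h₁ _ h₂ h => GSp4.coset_eq_of_gbInvariants_eq h₁.2 h₂.2 h)
    _ ≤ 24 * 12 := by
      rw [Set.ncard_coe_finset, Finset.card_product]
      exact Nat.mul_le_mul (card_nthRootsFinset_le _ _) (card_nthRootsFinset_le _ _)
end

section
/- There is an absolute constant C such that for every prime ℓ ≥ 5 and each 1 ≤ i ≤ 5, the image of GC^i(ℓ) ∩ GB(ℓ) under the quotient map GB(ℓ) → GB(ℓ)/GU(ℓ) has cardinality at most C·ℓ. -/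
open Matrix Polynomial

/-- `GU(ℓ) = {[[A, AS], [0, (ᵗA)⁻¹]] : A = [[1, a], [0, 1]], S symmetric}`. -/
def GUSet (ℓ : ℕ) : Set (GL (Fin 4) (ZMod ℓ)) :=
  {M | ∃ (a : ZMod ℓ) (S : Matrix (Fin 2) (Fin 2) (ZMod ℓ)), S.IsSymm ∧
    M.val = blocks4 !![1, a; 0, 1] (!![1, a; 0, 1] * S) 0 (!![1, a; 0, 1]ᵀ⁻¹)}
/-!
Every `m ∈ GB(ℓ)` factors as `[[A, 0], [0, μ Aᵀ⁻¹]] · [[1, S], [0, 1]]`, and `m·GU(ℓ)` only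
depends on the diagonal of `A` and on `μ`, which are recorded by the entries
`(m₀₀, m₁₁, m₃₃) = (A₀₀, A₁₁, μ / A₁₁)`. These are eigenvalues of `m`, so for
`m ∈ GC^i(ℓ)` they are roots of `f_i` for one of the `ℓ` values of its parameter; a quartic
has at most four roots, leaving at most `64 ℓ` cosets.
-/

section TwoByTwo

variable {R : Type*} [CommRing R]

theorem Matrix.charpoly_fin_two_of_apply_one_zero {M : Matrix (Fin 2) (Fin 2) R}
    (h : M 1 0 = 0) : M.charpoly = (X - C (M 0 0)) * (X - C (M 1 1)) := by
  rw [charpoly_of_isUpperTriangular M ?_, Fin.prod_univ_two]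
  intro i j hij
  fin_cases i <;> fin_cases j <;> simp_all

theorem Matrix.inv_apply_one_zero_of_apply_one_zero {M : Matrix (Fin 2) (Fin 2) R}
    (h : M 1 0 = 0) : M⁻¹ 1 0 = 0 := by
  simp [inv_def, adjugate_fin_two, h]

theorem Matrix.apply_one_one_mul_inv_apply_one_one {M : Matrix (Fin 2) (Fin 2) R}
    (h : M 1 0 = 0) (hM : IsUnit M.det) : M 1 1 * M⁻¹ 1 1 = 1 := by
  simpa [mul_apply, h] using congrFun (congrFun (mul_nonsing_inv M hM) 1) 1

theorem Matrix.IsSymm.mul_mul_transpose {n : Type*} [Fintype n] {S : Matrix n n R}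
    (hS : S.IsSymm) (B : Matrix n n R) : (B * S * Bᵀ).IsSymm := by
  rw [IsSymm, transpose_mul, transpose_mul, transpose_transpose, hS.eq, Matrix.mul_assoc]

theorem unitri_mul_unitri (a b : R) : !![1, a; 0, 1] * !![1, b; 0, 1] = !![1, a + b; 0, 1] := by
  simp [add_comm]

theorem isUnit_det_unitri (a : R) : IsUnit (!![1, a; 0, 1]).det := by
  simp [det_fin_two_of]

theorem eq_mul_unitri_of_diag_eq {K : Type*} [Field K] {A A' : Matrix (Fin 2) (Fin 2) K}
    (hA : A 1 0 = 0) (hA' : A' 1 0 = 0) (h00 : A 0 0 = A' 0 0) (h11 : A 1 1 = A' 1 1)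
    (hx : A 0 0 ≠ 0) : A' = A * !![1, (A' 0 1 - A 0 1) / A 0 0; 0, 1] := by
  ext i j
  fin_cases i <;> fin_cases j <;> simp [mul_apply, hA, hA', ← h00, ← h11]
  field_simp
  ring

end TwoByTwo

theorem Set.ncard_image_le_ncard_image_of_factorsThrough {α β γ : Type*} [Nonempty α]
    {s : Set α} {f : α → β} {g : α → γ} (hs : (g '' s).Finite)
    (h : ∀ a ∈ s, ∀ b ∈ s, g a = g b → f a = f b) :
    (f '' s).ncard ≤ (g '' s).ncard := by
  classical
  have hfg : f '' s = (fun c => f (Function.invFunOn g s c)) '' (g '' s) := by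
    rw [Set.image_image]
    refine Set.image_congr fun a ha => (h _ ?_ a ha ?_).symm
    exacts [Function.invFunOn_mem ⟨a, ha, rfl⟩, Function.invFunOn_eq ⟨a, ha, rfl⟩]
  rw [hfg]
  exact Set.ncard_image_le hs

theorem setOf_inv_mul_mem_eq {G : Type*} [Group G] {H : Set G}
    (hH : ∀ a ∈ H, ∀ b ∈ H, a * b ∈ H) {g g' : G} (h : g⁻¹ * g' ∈ H) (h' : g'⁻¹ * g ∈ H) :
    {x | g⁻¹ * x ∈ H} = {x | g'⁻¹ * x ∈ H} := by
  ext x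
  constructor
  · intro hx
    simpa [mul_assoc] using hH _ h' _ hx
  · intro hx
    simpa [mul_assoc] using hH _ h _ hx

section Siegel

variable {ℓ : ℕ}

/-- `GB(ℓ)` consists of the products `siegelLevi A μ * siegelUnip S` with `A` upper triangular
and `S` symmetric, `GU(ℓ)` of those with `A` unitriangular and `μ = 1`. -/
noncomputable def siegelLevi (A : Matrix (Fin 2) (Fin 2) (ZMod ℓ)) (μ : ZMod ℓ) :
    Matrix (Fin 4) (Fin 4) (ZMod ℓ) :=
  blocks4 A 0 0 (μ • Aᵀ⁻¹)

def siegelUnip (T : Matrix (Fin 2) (Fin 2) (ZMod ℓ)) : Matrix (Fin 4) (Fin 4) (ZMod ℓ) :=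
  blocks4 1 T 0 1

theorem blocks4_mul (A B C D E F G H : Matrix (Fin 2) (Fin 2) (ZMod ℓ)) :
    blocks4 A B C D * blocks4 E F G H =
      blocks4 (A * E + B * G) (A * F + B * H) (C * E + D * G) (C * F + D * H) := by
  simp only [blocks4, reindex_apply, submatrix_mul_equiv, fromBlocks_multiply]

theorem charpoly_blocks4_zero (A B D : Matrix (Fin 2) (Fin 2) (ZMod ℓ)) :
    (blocks4 A B 0 D).charpoly = A.charpoly * D.charpoly := by
  rw [blocks4, charpoly_reindex, charpoly_fromBlocks_zero₂₁]

theorem siegelLevi_mul_siegelUnip (A T : Matrix (Fin 2) (Fin 2) (ZMod ℓ)) (μ : ZMod ℓ) :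
    siegelLevi A μ * siegelUnip T = blocks4 A (A * T) 0 (μ • Aᵀ⁻¹) := by
  simp [siegelLevi, siegelUnip, blocks4_mul]

theorem siegelLevi_mul_siegelLevi (A B : Matrix (Fin 2) (Fin 2) (ZMod ℓ)) (μ ν : ZMod ℓ) :
    siegelLevi A μ * siegelLevi B ν = siegelLevi (A * B) (μ * ν) := by
  simp [siegelLevi, blocks4_mul, transpose_mul, Matrix.mul_inv_rev, smul_smul, mul_comm]

theorem siegelUnip_mul_siegelUnip (S T : Matrix (Fin 2) (Fin 2) (ZMod ℓ)) :
    siegelUnip S * siegelUnip T = siegelUnip (S + T) := by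
  simp [siegelUnip, blocks4_mul, add_comm]

theorem siegelUnip_mul_siegelLevi {B : Matrix (Fin 2) (Fin 2) (ZMod ℓ)} (hB : IsUnit B.det)
    (T : Matrix (Fin 2) (Fin 2) (ZMod ℓ)) (ν : ZMod ℓ) :
    siegelUnip T * siegelLevi B ν = siegelLevi B ν * siegelUnip (ν • (B⁻¹ * T * B⁻¹ᵀ)) := by
  simp [siegelLevi, siegelUnip, blocks4_mul, transpose_nonsing_inv, ← Matrix.mul_assoc,
    mul_nonsing_inv _ hB]

theorem siegel_mul_siegel {A B S T : Matrix (Fin 2) (Fin 2) (ZMod ℓ)} (hB : IsUnit B.det)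
    (μ ν : ZMod ℓ) :
    siegelLevi A μ * siegelUnip S * (siegelLevi B ν * siegelUnip T) =
      siegelLevi (A * B) (μ * ν) * siegelUnip (ν • (B⁻¹ * S * B⁻¹ᵀ) + T) := by
  rw [Matrix.mul_assoc, ← Matrix.mul_assoc (siegelUnip S), siegelUnip_mul_siegelLevi hB,
    Matrix.mul_assoc, siegelUnip_mul_siegelUnip, ← Matrix.mul_assoc, siegelLevi_mul_siegelLevi]

theorem mem_GUSet_iff {M : GL (Fin 4) (ZMod ℓ)} :
    M ∈ GUSet ℓ ↔ ∃ (a : ZMod ℓ) (S : Matrix (Fin 2) (Fin 2) (ZMod ℓ)), S.IsSymm ∧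
      M.val = siegelLevi !![1, a; 0, 1] 1 * siegelUnip S := by
  simp only [GUSet, Set.mem_ofPred_eq, siegelLevi_mul_siegelUnip, one_smul]

theorem mul_mem_GUSet {u v : GL (Fin 4) (ZMod ℓ)} (hu : u ∈ GUSet ℓ) (hv : v ∈ GUSet ℓ) :
    u * v ∈ GUSet ℓ := by
  obtain ⟨a, S, hS, hu⟩ := mem_GUSet_iff.1 hu
  obtain ⟨b, T, hT, hv⟩ := mem_GUSet_iff.1 hv
  have hST := ((hS.mul_mul_transpose !![1, b; 0, 1]⁻¹).smul (1 : ZMod ℓ)).add hT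
  refine mem_GUSet_iff.2 ⟨a + b, _, hST, ?_⟩
  rw [Units.val_mul, hu, hv, siegel_mul_siegel (isUnit_det_unitri b), unitri_mul_unitri, mul_one]

end Siegel

section GB

variable {ℓ : ℕ}

def diagTriple {R : Type*} (M : Matrix (Fin 4) (Fin 4) R) : R × R × R :=
  (M 0 0, M 1 1, M 3 3)

theorem exists_siegel_of_mem_GBSet {m : GL (Fin 4) (ZMod ℓ)} (hm : m ∈ GBSet ℓ) :
    ∃ (A S : Matrix (Fin 2) (Fin 2) (ZMod ℓ)) (μ : ZMod ℓ), IsUnit A.det ∧ A 1 0 = 0 ∧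
      S.IsSymm ∧ m.val = siegelLevi A μ * siegelUnip S := by
  obtain ⟨A, S, μ, hA, hA10, hS, hm⟩ := hm
  refine ⟨A, ((μ⁻¹ : (ZMod ℓ)ˣ) : ZMod ℓ) • S, μ, hA, hA10, hS.smul _, ?_⟩
  rw [hm, siegelLevi_mul_siegelUnip, mul_smul_comm]

theorem diagTriple_siegel (A T : Matrix (Fin 2) (Fin 2) (ZMod ℓ)) (μ : ZMod ℓ) :
    diagTriple (siegelLevi A μ * siegelUnip T) = (A 0 0, A 1 1, μ * A⁻¹ 1 1) := by
  rw [siegelLevi_mul_siegelUnip, ← transpose_nonsing_inv]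
  rfl

theorem charpoly_siegel {A : Matrix (Fin 2) (Fin 2) (ZMod ℓ)} (hA : A 1 0 = 0)
    (T : Matrix (Fin 2) (Fin 2) (ZMod ℓ)) (μ : ZMod ℓ) :
    (siegelLevi A μ * siegelUnip T).charpoly =
      (X - C (A 0 0)) * (X - C (A 1 1)) * ((X - C (μ * A⁻¹ 0 0)) * (X - C (μ * A⁻¹ 1 1))) := by
  have hD : (μ • Aᵀ⁻¹)ᵀ 1 0 = 0 := by
    simp [← transpose_nonsing_inv, inv_apply_one_zero_of_apply_one_zero hA]
  rw [siegelLevi_mul_siegelUnip, charpoly_blocks4_zero, charpoly_fin_two_of_apply_one_zero hA,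
    ← charpoly_transpose, charpoly_fin_two_of_apply_one_zero hD, ← transpose_nonsing_inv]
  rfl

theorem inv_mul_mem_GUSet_of_diagTriple_eq [Fact ℓ.Prime] {m m' : GL (Fin 4) (ZMod ℓ)}
    (hm : m ∈ GBSet ℓ) (hm' : m' ∈ GBSet ℓ) (h : diagTriple m.val = diagTriple m'.val) :
    m⁻¹ * m' ∈ GUSet ℓ := by
  obtain ⟨A, S, μ, hA, hA10, hS, hm⟩ := exists_siegel_of_mem_GBSet hm
  obtain ⟨A', S', μ', hA', hA'10, hS', hm'⟩ := exists_siegel_of_mem_GBSet hm'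
  rw [hm, hm', diagTriple_siegel, diagTriple_siegel, Prod.mk.injEq, Prod.mk.injEq] at h
  obtain ⟨h00, h11, h33⟩ := h
  have hA00 : A 0 0 ≠ 0 := by
    refine left_ne_zero_of_mul (a := A 0 0) (b := A 1 1) ?_
    simpa [det_fin_two, hA10] using hA.ne_zero
  have hinv := apply_one_one_mul_inv_apply_one_one hA10 hA
  have hinv' := apply_one_one_mul_inv_apply_one_one hA'10 hA'
  have hinv11 : A⁻¹ 1 1 = A'⁻¹ 1 1 :=
    mul_left_cancel₀ (left_ne_zero_of_mul_eq_one hinv) (hinv.trans (h11 ▸ hinv').symm)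
  have hμ : μ = μ' := mul_right_cancel₀ (right_ne_zero_of_mul_eq_one hinv) (hinv11 ▸ h33)
  set a := (A' 0 1 - A 0 1) / A 0 0
  set U : Matrix (Fin 2) (Fin 2) (ZMod ℓ) := !![1, a; 0, 1]
  have hA'U : A' = A * U := eq_mul_unitri_of_diag_eq hA10 hA'10 h00 h11 hA00
  refine mem_GUSet_iff.2 ⟨a, S' - (1 : ZMod ℓ) • (U⁻¹ * S * U⁻¹ᵀ),
    hS'.sub ((hS.mul_mul_transpose _).smul _), ?_⟩
  rw [Units.val_mul, Units.inv_mul_eq_iff_eq_mul, hm, hm',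
    siegel_mul_siegel (isUnit_det_unitri _), ← hA'U, mul_one, hμ, add_sub_cancel]

end GB

theorem natDegree_fPoly_le (ℓ i : ℕ) (μ : ZMod ℓ) : (fPoly ℓ i μ).natDegree ≤ 4 := by
  unfold fPoly
  split_ifs <;> compute_degree

noncomputable def fPolyRoots (ℓ : ℕ) [Fact ℓ.Prime] (i : ℕ) (μ : ZMod ℓ) : Finset (ZMod ℓ) :=
  (fPoly ℓ i μ).roots.toFinset

noncomputable def rootTriples (ℓ : ℕ) [Fact ℓ.Prime] (i : ℕ) :
    Finset (ZMod ℓ × ZMod ℓ × ZMod ℓ) :=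
  Finset.univ.biUnion fun μ => fPolyRoots ℓ i μ ×ˢ fPolyRoots ℓ i μ ×ˢ fPolyRoots ℓ i μ

section Count

variable {ℓ : ℕ} [Fact ℓ.Prime]

theorem card_fPolyRoots_le (i : ℕ) (μ : ZMod ℓ) : (fPolyRoots ℓ i μ).card ≤ 4 :=
  (Multiset.toFinset_card_le _).trans ((card_roots' _).trans (natDegree_fPoly_le ℓ i μ))

theorem card_rootTriples_le (i : ℕ) : (rootTriples ℓ i).card ≤ 64 * ℓ := by
  calc (rootTriples ℓ i).card
      ≤ ∑ μ : ZMod ℓ, (fPolyRoots ℓ i μ ×ˢ fPolyRoots ℓ i μ ×ˢ fPolyRoots ℓ i μ).card :=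
        Finset.card_biUnion_le
    _ ≤ ∑ _μ : ZMod ℓ, 4 * (4 * 4) := by
        gcongr with μ
        simp only [Finset.card_product]
        gcongr <;> exact card_fPolyRoots_le i μ
    _ = 64 * ℓ := by simp [ZMod.card, mul_comm]

theorem diagTriple_mem_rootTriples {i : ℕ} {m : GL (Fin 4) (ZMod ℓ)} (hGC : m ∈ GCSet ℓ i)
    (hGB : m ∈ GBSet ℓ) : diagTriple m.val ∈ rootTriples ℓ i := by
  obtain ⟨-, μ, -, -, -, -, -, -, -, hf, -⟩ := hGC
  obtain ⟨A, S, ν, -, hA10, -, hm⟩ := exists_siegel_of_mem_GBSet hGB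
  have hroot : ∀ z, m.val.charpoly.IsRoot z → z ∈ fPolyRoots ℓ i μ := fun z hz =>
    Multiset.mem_toFinset.2 (mem_roots'.2 ⟨hf ▸ (charpoly_monic _).ne_zero, hf ▸ hz⟩)
  rw [hm, charpoly_siegel hA10] at hroot
  refine Finset.mem_biUnion.2 ⟨μ, Finset.mem_univ _, ?_⟩
  rw [hm, diagTriple_siegel, Finset.mem_product, Finset.mem_product]
  refine ⟨hroot _ ?_, hroot _ ?_, hroot _ ?_⟩ <;> simp

end Count

/-- The image in `GB(ℓ)/GU(ℓ)` is encoded as the set of left cosets `m·GU(ℓ)`,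
`m ∈ GC^i(ℓ) ∩ GB(ℓ)`. -/
theorem gsp4_quotient_image_linear_bound :
    ∃ C : ℕ, ∀ ℓ : ℕ, ℓ.Prime → 5 ≤ ℓ → ∀ i : ℕ, 1 ≤ i → i ≤ 5 →
      Set.ncard {S : Set (GL (Fin 4) (ZMod ℓ)) |
        ∃ m ∈ GCSet ℓ i ∩ GBSet ℓ, S = {x | m⁻¹ * x ∈ GUSet ℓ}} ≤ C * ℓ := by
  refine ⟨64, fun ℓ hp _ i _ _ => ?_⟩
  have := Fact.mk hp
  set T := GCSet ℓ i ∩ GBSet ℓ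
  have hcosets : {S : Set (GL (Fin 4) (ZMod ℓ)) | ∃ m ∈ T, S = {x | m⁻¹ * x ∈ GUSet ℓ}} =
      (fun m => {x | m⁻¹ * x ∈ GUSet ℓ}) '' T := by
    simp only [Set.image, eq_comm]
  calc _ = ((fun m => {x | m⁻¹ * x ∈ GUSet ℓ}) '' T).ncard := by rw [hcosets]
    _ ≤ ((fun m => diagTriple m.val) '' T).ncard := by
        refine Set.ncard_image_le_ncard_image_of_factorsThrough (Set.toFinite _)
          fun m hm m' hm' h => ?_
        exact setOf_inv_mul_mem_eq (fun _ hu _ hv => mul_mem_GUSet hu hv)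
          (inv_mul_mem_GUSet_of_diagTriple_eq hm.2 hm'.2 h)
          (inv_mul_mem_GUSet_of_diagTriple_eq hm'.2 hm.2 h.symm)
    _ ≤ (rootTriples ℓ i).card := by
        rw [← Set.ncard_coe_finset]
        refine Set.ncard_le_ncard ?_ (Finset.finite_toSet _)
        rintro _ ⟨m, hm, rfl⟩
        exact diagTriple_mem_rootTriples hm.1 hm.2
    _ ≤ 64 * ℓ := card_rootTriples_le i
end
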